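/- arXiv:math/0611572 — 4 statements merged into one kernel-verified Lean document; each statement's English description precedes it below -/
import Mathlib

section
/- Let h be the projective linear map (x:y:z) ↦ (x : x−y : x−z) and σ the Cremona involution (x:y:z) ↦ (yz:xz:xy). Then (h ∘ σ)^3 is the identity birational map of ℙ²(ℂ). -/
/-- Gizatullin's relation: with h = (x : x−y : x−z) ∈ PGL₃(ℂ) and the Cremona
involution σ = (yz : xz : xy), the birational map (h ∘ σ)³ is the identity of
ℙ²(ℂ): on a dense open set, applying h ∘ σ three times gives a nonzero scalar
multiple of the original point. -/
theorem gizatullin_relation_projective :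
    ∀ x y z : ℂ, x ≠ 0 → y ≠ 0 → z ≠ 0 → x ≠ y → x ≠ z →
      ∃ c : ℂ, c ≠ 0 ∧
        (((fun v : ℂ × ℂ × ℂ => (v.1, v.1 - v.2.1, v.1 - v.2.2)) ∘
          (fun v : ℂ × ℂ × ℂ => (v.2.1 * v.2.2, v.1 * v.2.2, v.1 * v.2.1))) ∘
         ((fun v : ℂ × ℂ × ℂ => (v.1, v.1 - v.2.1, v.1 - v.2.2)) ∘
          (fun v : ℂ × ℂ × ℂ => (v.2.1 * v.2.2, v.1 * v.2.2, v.1 * v.2.1))) ∘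
         ((fun v : ℂ × ℂ × ℂ => (v.1, v.1 - v.2.1, v.1 - v.2.2)) ∘
          (fun v : ℂ × ℂ × ℂ => (v.2.1 * v.2.2, v.1 * v.2.2, v.1 * v.2.1)))) (x, y, z)
        = (c * x, c * y, c * z) := by
  intro x y z hx hy hz hxy hxz
  refine ⟨x * y^2 * z^2 * (x - y) * (x - z), ?_, ?_⟩
  · exact mul_ne_zero (mul_ne_zero (mul_ne_zero (mul_ne_zero hx (pow_ne_zero 2 hy))
      (pow_ne_zero 2 hz)) (sub_ne_zero.mpr hxy)) (sub_ne_zero.mpr hxz)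
  · simp only [Function.comp]
    refine Prod.ext ?_ (Prod.ext ?_ ?_) <;> simp <;> ring
end

section
/- Let g be a polynomial automorphism of ℂ² that commutes with (x,y) ↦ (x+y, y) and with (x,y) ↦ (x+1, y). Then g has the form g(x,y) = (x + A(y), y) for some polynomial A. -/
open MvPolynomial

private lemma eval_aeval_poly (v : Fin 2 → Polynomial ℂ) (x : ℂ) (Q : MvPolynomial (Fin 2) ℂ) :
    Polynomial.eval x (MvPolynomial.aeval v Q) = MvPolynomial.eval (fun i => (v i).eval x) Q := by
  induction Q using MvPolynomial.induction_on with
  | C a => simp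
  | add p q hp hq => simp [hp, hq]
  | mul_X p i hp => simp [hp]

private lemma periodic_const (q : Polynomial ℂ) (h : ∀ x, q.eval (x+1) = q.eval x) (x : ℂ) :
    q.eval x = q.eval 0 := by
  have hn : ∀ n : ℕ, q.eval (n : ℂ) = q.eval 0 := by
    intro n; induction n with
    | zero => simp
    | succ n ih => push_cast; rw [h]; exact ih
  have hq : q = Polynomial.C (q.eval 0) := by
    apply Polynomial.eq_of_infinite_eval_eq
    apply Set.Infinite.mono (s := Set.range (Nat.cast : ℕ → ℂ))
    · rintro _ ⟨n, rfl⟩; simp [hn n]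
    · exact Set.infinite_range_of_injective Nat.cast_injective
  conv_lhs => rw [hq]
  simp

/-- A polynomial automorphism of ℂ² commuting with (x,y) ↦ (x+y, y) and with
(x,y) ↦ (x+1, y) has the form (x,y) ↦ (x + A(y), y) for some polynomial A. -/
theorem commuting_polynomial_automorphism_form (g : ℂ × ℂ → ℂ × ℂ)
    (P Q : MvPolynomial (Fin 2) ℂ)
    (hpoly : ∀ p : ℂ × ℂ, g p = (eval ![p.1, p.2] P, eval ![p.1, p.2] Q))
    (hbij : Function.Bijective g)
    (h1 : ∀ p : ℂ × ℂ, g (p.1 + p.2, p.2) = ((g p).1 + (g p).2, (g p).2))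
    (h2 : ∀ p : ℂ × ℂ, g (p.1 + 1, p.2) = ((g p).1 + 1, (g p).2)) :
    ∃ A : Polynomial ℂ, ∀ x y : ℂ, g (x, y) = (x + A.eval y, y) := by
  -- translate h2 into polynomial evaluation facts
  have hP : ∀ x y : ℂ, eval ![x + 1, y] P = eval ![x, y] P + 1 := by
    intro x y
    have := h2 (x, y)
    rw [hpoly (x + 1, y), hpoly (x, y)] at this
    exact (Prod.mk.injEq _ _ _ _ ▸ this).1
  have hQ : ∀ x y : ℂ, eval ![x + 1, y] Q = eval ![x, y] Q := by
    intro x y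
    have := h2 (x, y)
    rw [hpoly (x + 1, y), hpoly (x, y)] at this
    exact (Prod.mk.injEq _ _ _ _ ▸ this).2
  -- the first coordinate is x + c(y)
  have key : ∀ x y : ℂ, eval ![x, y] P = x + eval ![0, y] P := by
    intro x y
    set p : Polynomial ℂ := MvPolynomial.aeval ![Polynomial.X, Polynomial.C y] P - Polynomial.X
      with hp
    have hev : ∀ x : ℂ, p.eval x = eval ![x, y] P - x := by
      intro x
      rw [hp]
      simp only [Polynomial.eval_sub, Polynomial.eval_X, eval_aeval_poly]
      have hv : (fun i => Polynomial.eval x (![Polynomial.X, Polynomial.C y] i)) = ![x, y] := by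
        funext i; fin_cases i <;> simp
      rw [hv]
    have hper : ∀ x : ℂ, p.eval (x + 1) = p.eval x := by
      intro x; rw [hev, hev, hP]; ring
    have := periodic_const p hper x
    rw [hev, hev] at this
    linear_combination this
  -- from h1, the second coordinate is y
  have keyQ : ∀ x y : ℂ, eval ![x, y] Q = y := by
    intro x y
    have := h1 (x, y)
    rw [hpoly (x + y, y), hpoly (x, y)] at this
    have h' := (Prod.mk.injEq _ _ _ _ ▸ this).1
    simp only at h'
    rw [key (x + y) y, key x y] at h'
    linear_combination -h'
  refine ⟨MvPolynomial.aeval ![(0 : Polynomial ℂ), Polynomial.X] P, fun x y => ?_⟩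
  have hA : Polynomial.eval y (MvPolynomial.aeval ![(0 : Polynomial ℂ), Polynomial.X] P)
      = eval ![0, y] P := by
    rw [eval_aeval_poly]
    have hv : (fun i => Polynomial.eval y (![(0 : Polynomial ℂ), Polynomial.X] i)) = ![0, y] := by
      funext i; fin_cases i <;> simp
    rw [hv]
  rw [hpoly (x, y), hA]
  simp [key x y, keyQ x y]
end

section
/- Let φ be a group endomorphism of the group of affine transformations of ℂ² of the form considered, satisfying: φ(x+αy, y) = (x + Θ(α)y + ς(α), y), φ(x, y+γ) = (x+η(γ), y+μ(γ)), and φ(x+β, y) = (x+λ(β), y+ζ(β)). Then the relation φ(g_α) φ(h_γ) = φ(f_{αγ}) φ(h_γ) φ(g_α) forces λ(αγ) = Θ(α)μ(γ) for all α, γ ∈ ℂ, and ζ ≡ 0. -/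
/-- With φ(g_α) = (x + Θ(α)y + ς(α), y), φ(h_γ) = (x + η(γ), y + μ(γ)) and
φ(f_β) = (x + λ(β), y + ζ(β)), the relation
φ(g_α) ∘ φ(h_γ) = φ(f_{αγ}) ∘ φ(h_γ) ∘ φ(g_α) forces λ(αγ) = Θ(α)μ(γ)
for all α, γ, and ζ ≡ 0. -/
theorem relation_forces_multiplicativity
    (Θ ς eta mu lam zeta : ℂ → ℂ)
    (hrel : ∀ α γ : ℂ,
      ((fun p : ℂ × ℂ => (p.1 + Θ α * p.2 + ς α, p.2)) ∘
       (fun p : ℂ × ℂ => (p.1 + eta γ, p.2 + mu γ)))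
      =
      ((fun p : ℂ × ℂ => (p.1 + lam (α * γ), p.2 + zeta (α * γ))) ∘
       (fun p : ℂ × ℂ => (p.1 + eta γ, p.2 + mu γ)) ∘
       (fun p : ℂ × ℂ => (p.1 + Θ α * p.2 + ς α, p.2)))) :
    (∀ α γ : ℂ, lam (α * γ) = Θ α * mu γ) ∧ (∀ β : ℂ, zeta β = 0) := by
  have key : ∀ α γ : ℂ, Θ α * mu γ = lam (α * γ) ∧ zeta (α * γ) = 0 := by
    intro α γ
    have h := congrFun (hrel α γ) (0, 0)
    simp only [Function.comp_apply] at h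
    obtain ⟨h1, h2⟩ := Prod.mk.injEq .. ▸ h
    constructor
    · have := h1; push_cast at this ⊢; linear_combination this
    · linear_combination -h2
  refine ⟨fun α γ => ((key α γ).1).symm, fun β => ?_⟩
  have := (key β 1).2
  simpa using this
end

section
/- In the affine chart, with h(x,y) = (x/(x−1), (x−y)/(x−1)) and σ(x,y) = (1/x, 1/y), the composition (h ∘ σ)³ is the identity as a birational map of ℂ². -/
/-!
On the open set where `x ≠ 0`, `y ≠ 0`, `x ≠ 1`, `y ≠ x`, the map `h ∘ σ` has the closed form
`(x, y) ↦ (1/(1-x), (y-x)/((1-x) y))`. Its first coordinate is the Möbius map `x ↦ 1/(1-x)` of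
order three. Composing the closed form with itself gives `((x-1)/x, (1-x)/(y-x))`, and one more
application returns `(x, y)`.
-/

namespace Gizatullin

variable {K : Type*} [Field K]

def hMap (p : K × K) : K × K := (p.1 / (p.1 - 1), (p.1 - p.2) / (p.1 - 1))

def sigmaMap (p : K × K) : K × K := (1 / p.1, 1 / p.2)

def hSigma (p : K × K) : K × K := hMap (sigmaMap p)

theorem hSigma_apply {x y : K} (hx : x ≠ 0) (hy : y ≠ 0) (hx1 : x ≠ 1) :
    hSigma (x, y) = (1 / (1 - x), (y - x) / ((1 - x) * y)) := by
  simp only [hSigma, hMap, sigmaMap, Prod.mk.injEq]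
  constructor <;> field_simp

theorem hSigma_hSigma {x y : K} (hx : x ≠ 0) (hy : y ≠ 0) (hx1 : x ≠ 1) (hyx : y ≠ x) :
    hSigma (hSigma (x, y)) = ((x - 1) / x, (1 - x) / (y - x)) := by
  have h1x : 1 - x ≠ 0 := sub_ne_zero.mpr hx1.symm
  have hyx' : y - x ≠ 0 := sub_ne_zero.mpr hyx
  rw [hSigma_apply hx hy hx1, hSigma_apply (by simpa using h1x) (by simp [*])]
  · have h1_sub : 1 - 1 / (1 - x) = -x / (1 - x) := by field_simp; ring
    rw [h1_sub, Prod.mk.injEq]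
    constructor <;> field_simp <;> ring
  · rw [Ne, div_eq_one_iff_eq h1x]
    intro h
    exact hx (by linear_combination h)

theorem hSigma_hSigma_hSigma {x y : K} (hx : x ≠ 0) (hy : y ≠ 0) (hx1 : x ≠ 1) (hyx : y ≠ x) :
    hSigma (hSigma (hSigma (x, y))) = (x, y) := by
  have h1x : 1 - x ≠ 0 := sub_ne_zero.mpr hx1.symm
  have hyx' : y - x ≠ 0 := sub_ne_zero.mpr hyx
  have hx1' : x - 1 ≠ 0 := sub_ne_zero.mpr hx1
  rw [hSigma_hSigma hx hy hx1 hyx, hSigma_apply (by simp [*]) (by simp [*])]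
  · simp only [Prod.mk.injEq]
    constructor <;> field_simp <;> ring
  · rw [Ne, div_eq_one_iff_eq hx]
    intro h
    exact one_ne_zero (by linear_combination -h : (1 : K) = 0)

end Gizatullin

/-- Gizatullin's relation in an affine chart: with h(x,y) = (x/(x−1), (x−y)/(x−1))
and σ(x,y) = (1/x, 1/y), the composition (h ∘ σ)³ is the identity birational map
of ℂ² (equality wherever all intermediate denominators are nonzero). -/
theorem gizatullin_relation_affine :
    ∀ x y : ℂ,
      ∀ p1 : ℂ × ℂ, p1 = (1 / x, 1 / y) →
      ∀ p2 : ℂ × ℂ, p2 = (p1.1 / (p1.1 - 1), (p1.1 - p1.2) / (p1.1 - 1)) →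
      ∀ p3 : ℂ × ℂ, p3 = (1 / p2.1, 1 / p2.2) →
      ∀ p4 : ℂ × ℂ, p4 = (p3.1 / (p3.1 - 1), (p3.1 - p3.2) / (p3.1 - 1)) →
      ∀ p5 : ℂ × ℂ, p5 = (1 / p4.1, 1 / p4.2) →
      ∀ p6 : ℂ × ℂ, p6 = (p5.1 / (p5.1 - 1), (p5.1 - p5.2) / (p5.1 - 1)) →
      x ≠ 0 → y ≠ 0 → p1.1 ≠ 1 → p2.1 ≠ 0 → p2.2 ≠ 0 → p3.1 ≠ 1 →
      p4.1 ≠ 0 → p4.2 ≠ 0 → p5.1 ≠ 1 →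
      p6 = (x, y) := by
  rintro x y p1 rfl p2 rfl p3 rfl p4 rfl p5 rfl p6 rfl hx hy hx_inv - hdiff - - - -
  have hx1 : x ≠ 1 := fun h => hx_inv (by simp [h])
  have hyx : y ≠ x := by
    rintro rfl
    exact hdiff (by simp)
  exact Gizatullin.hSigma_hSigma_hSigma hx hy hx1 hyx
end
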